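/- Let 𝔤 be a finite-dimensional real Lie algebra, U ⊆ ℝ³ open, and let A : U → (Fin 3 → 𝔤) be three times continuously differentiable. Set B := curl A + (1/2) • ⋆[A,A]. Then the Yang–Mills (Bianchi-type) identity div(curl B + ⋆[A,B]) + ⋆[A, ⋆(curl B + ⋆[A,B])] = 0 holds on U. -/

import Mathlib

open scoped BigOperators

/-- The Levi-Civita symbol on three indices (totally antisymmetric, `ε 0 1 2 = 1`). -/
noncomputable def levicivita (i j k : Fin 3) : ℝ :=
  (((j : ℕ) : ℝ) - ((i : ℕ) : ℝ)) * (((k : ℕ) : ℝ) - ((j : ℕ) : ℝ)) *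
    (((k : ℕ) : ℝ) - ((i : ℕ) : ℝ)) / 2

/-- The partial derivative `∂_μ f` on `ℝ³`. -/
noncomputable def pderiv3 {E : Type*} [NormedAddCommGroup E] [NormedSpace ℝ E]
    (μ : Fin 3) (f : EuclideanSpace ℝ (Fin 3) → E) (x : EuclideanSpace ℝ (Fin 3)) : E :=
  fderiv ℝ f x (EuclideanSpace.single μ 1)

/-- The gradient of a `𝔤`-valued function on `ℝ³`. -/
noncomputable def grad3 {𝔤 : Type*} [NormedAddCommGroup 𝔤] [NormedSpace ℝ 𝔤]
    (q : EuclideanSpace ℝ (Fin 3) → 𝔤) (x : EuclideanSpace ℝ (Fin 3)) : Fin 3 → 𝔤 :=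
  fun μ => pderiv3 μ q x

/-- The curl of a `𝔤`-valued vector field on `ℝ³`:
`(curl A)(α) = Σ_{μ,ν} ε(α,μ,ν) • ∂_μ A(ν)`. -/
noncomputable def curl3 {𝔤 : Type*} [NormedAddCommGroup 𝔤] [NormedSpace ℝ 𝔤]
    (A : EuclideanSpace ℝ (Fin 3) → Fin 3 → 𝔤) (x : EuclideanSpace ℝ (Fin 3)) :
    Fin 3 → 𝔤 :=
  fun α => ∑ μ : Fin 3, ∑ ν : Fin 3, levicivita α μ ν • pderiv3 μ (fun y => A y ν) x

/-- The divergence of a `𝔤`-valued vector field on `ℝ³`: `div A = Σ_μ ∂_μ A(μ)`. -/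
noncomputable def div3 {𝔤 : Type*} [NormedAddCommGroup 𝔤] [NormedSpace ℝ 𝔤]
    (A : EuclideanSpace ℝ (Fin 3) → Fin 3 → 𝔤) (x : EuclideanSpace ℝ (Fin 3)) : 𝔤 :=
  ∑ μ : Fin 3, pderiv3 μ (fun y => A y μ) x

/-- The cross-bracket `⋆[v,w](α) = Σ_{μ,ν} ε(α,μ,ν) • ⁅v(μ), w(ν)⁆`, where the Lie
bracket of `𝔤` is the continuous bilinear map `br`. -/
noncomputable def crossBr {𝔤 : Type*} [NormedAddCommGroup 𝔤] [NormedSpace ℝ 𝔤]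
    (br : 𝔤 →L[ℝ] 𝔤 →L[ℝ] 𝔤) (v w : Fin 3 → 𝔤) : Fin 3 → 𝔤 :=
  fun α => ∑ μ : Fin 3, ∑ ν : Fin 3, levicivita α μ ν • br (v μ) (w ν)

/-- The dot-bracket `⋆[v,⋆w] = Σ_α ⁅v(α), w(α)⁆`, where the Lie bracket of `𝔤` is the
continuous bilinear map `br`. -/
noncomputable def dotBr {𝔤 : Type*} [NormedAddCommGroup 𝔤] [NormedSpace ℝ 𝔤]
    (br : 𝔤 →L[ℝ] 𝔤 →L[ℝ] 𝔤) (v w : Fin 3 → 𝔤) : 𝔤 :=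
  ∑ α : Fin 3, br (v α) (w α)

/-! Write `J = curl B + ⋆[A,B]`. Since second partial derivatives commute, `div curl B = 0`, and
the Leibniz rule gives `div ⋆[A,B] = ⋆[curl A, ⋆B] - ⋆[A, ⋆curl B]`, so the left-hand side is
`⋆[curl A, ⋆B] + ⋆[A, ⋆⋆[A,B]]`. Contracting the Jacobi identity with `ε` gives
`⋆[A, ⋆⋆[A,C]] = ½ ⋆[⋆[A,A], ⋆C]` for every `C`, so the left-hand side equals
`⋆[curl A + ½ ⋆[A,A], ⋆B] = ⋆[B, ⋆B] = 0`. -/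

section LeviCivita

variable {M : Type*} [AddCommGroup M] [Module ℝ M]

theorem sum_levicivita_smul (f : Fin 3 → Fin 3 → Fin 3 → M) :
    ∑ α, ∑ μ, ∑ ν, levicivita α μ ν • f α μ ν
      = f 0 1 2 + f 1 2 0 + f 2 0 1 - f 0 2 1 - f 1 0 2 - f 2 1 0 := by
  simp only [Fin.sum_univ_three, levicivita, Fin.isValue]
  norm_num
  abel

theorem sum_levicivita_smul_cycle (f : Fin 3 → Fin 3 → Fin 3 → M) :
    ∑ α, ∑ μ, ∑ ν, levicivita α μ ν • f μ ν α = ∑ α, ∑ μ, ∑ ν, levicivita α μ ν • f α μ ν := by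
  rw [sum_levicivita_smul, sum_levicivita_smul]
  abel

theorem sum_levicivita_smul_swap (f : Fin 3 → Fin 3 → Fin 3 → M) :
    ∑ α, ∑ μ, ∑ ν, levicivita α μ ν • f μ α ν = -∑ α, ∑ μ, ∑ ν, levicivita α μ ν • f α μ ν := by
  rw [sum_levicivita_smul, sum_levicivita_smul]
  abel

theorem sum_levicivita_smul_eq_zero_of_symm (f : Fin 3 → Fin 3 → Fin 3 → M)
    (hf : ∀ α μ ν, f α μ ν = f μ α ν) : ∑ α, ∑ μ, ∑ ν, levicivita α μ ν • f α μ ν = 0 := by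
  rw [sum_levicivita_smul, hf 1 0 2, hf 2 0 1, hf 2 1 0]
  abel

end LeviCivita

section Bracket

variable {𝔤 : Type*} [NormedAddCommGroup 𝔤] [NormedSpace ℝ 𝔤] (br : 𝔤 →L[ℝ] 𝔤 →L[ℝ] 𝔤)

theorem br_swap (br_alt : ∀ a, br a a = 0) (u v : 𝔤) : br u v = -br v u := by
  have h := br_alt (u + v)
  simp only [map_add, add_apply, br_alt] at h
  linear_combination (norm := module) h

theorem dotBr_self (br_alt : ∀ a, br a a = 0) (v : Fin 3 → 𝔤) : dotBr br v v = 0 := by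
  simp [dotBr, br_alt]

theorem dotBr_add_left (u v w : Fin 3 → 𝔤) :
    dotBr br (u + v) w = dotBr br u w + dotBr br v w := by
  simp [dotBr, Finset.sum_add_distrib]

theorem dotBr_smul_left (t : ℝ) (v w : Fin 3 → 𝔤) : dotBr br (t • v) w = t • dotBr br v w := by
  simp [dotBr, Finset.smul_sum]

theorem dotBr_add_right (u v w : Fin 3 → 𝔤) :
    dotBr br u (v + w) = dotBr br u v + dotBr br u w := by
  simp [dotBr, Finset.sum_add_distrib]

theorem dotBr_crossBr (br_alt : ∀ a, br a a = 0)
    (br_jacobi : ∀ a b c, br a (br b c) + br b (br c a) + br c (br a b) = 0) (a c : Fin 3 → 𝔤) :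
    dotBr br a (crossBr br a c) = (1/2 : ℝ) • dotBr br (crossBr br a a) c := by
  have jacobi : ∀ u v w, br u (br v w) - br v (br u w) = br (br u v) w := fun u v w => by
    have h := br_jacobi u v w
    rw [br_swap br br_alt w (br u v), br_swap br br_alt w u, map_neg] at h
    linear_combination (norm := module) h
  have lhs : dotBr br a (crossBr br a c)
      = ∑ α, ∑ μ, ∑ ν, levicivita α μ ν • br (a α) (br (a μ) (c ν)) := by
    simp [dotBr, crossBr, map_sum, map_smul]
  have rhs : dotBr br (crossBr br a a) c
      = ∑ α, ∑ μ, ∑ ν, levicivita α μ ν • br (br (a α) (a μ)) (c ν) := by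
    simp only [dotBr, crossBr, map_sum, map_smul, FunLike.coe_sum, FunLike.coe_smul,
      Finset.sum_apply, Pi.smul_apply]
    exact sum_levicivita_smul_cycle (fun α μ ν => br (br (a α) (a μ)) (c ν))
  rw [lhs, rhs, sum_levicivita_smul, sum_levicivita_smul, ← jacobi, ← jacobi, ← jacobi,
    ← jacobi, ← jacobi, ← jacobi]
  module

theorem dotBr_add_dotBr_crossBr_eq_zero (br_alt : ∀ a, br a a = 0)
    (br_jacobi : ∀ a b c, br a (br b c) + br b (br c a) + br c (br a b) = 0)
    (a c b : Fin 3 → 𝔤) (hb : b = c + (1/2 : ℝ) • crossBr br a a) :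
    dotBr br c b + dotBr br a (crossBr br a b) = 0 := by
  rw [dotBr_crossBr br br_alt br_jacobi, ← dotBr_smul_left, ← dotBr_add_left, ← hb,
    dotBr_self br br_alt]

end Bracket

local notation "ℝ³" => EuclideanSpace ℝ (Fin 3)

section PartialDerivative

variable {F G H : Type*} [NormedAddCommGroup F] [NormedSpace ℝ F] [NormedAddCommGroup G]
  [NormedSpace ℝ G] [NormedAddCommGroup H] [NormedSpace ℝ H] {x : ℝ³}

theorem pderiv3_fun_add {f g : ℝ³ → F} (hf : DifferentiableAt ℝ f x)
    (hg : DifferentiableAt ℝ g x) (μ : Fin 3) :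
    pderiv3 μ (fun y => f y + g y) x = pderiv3 μ f x + pderiv3 μ g x := by
  simp [pderiv3, fderiv_fun_add hf hg]

theorem pderiv3_fun_sum_sum_smul {ι κ : Type*} [Fintype ι] [Fintype κ] (c : ι → κ → ℝ)
    {g : ι → κ → ℝ³ → F} (hg : ∀ i k, DifferentiableAt ℝ (g i k) x) (μ : Fin 3) :
    pderiv3 μ (fun y => ∑ i, ∑ k, c i k • g i k y) x = ∑ i, ∑ k, c i k • pderiv3 μ (g i k) x := by
  have hsum : HasFDerivAt (fun y => ∑ i, ∑ k, c i k • g i k y)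
      (∑ i, ∑ k, c i k • fderiv ℝ (g i k) x) x :=
    HasFDerivAt.fun_sum fun i _ => HasFDerivAt.fun_sum fun k _ =>
      (hg i k).hasFDerivAt.const_smul (c i k)
  simp [pderiv3, hsum.fderiv]

theorem pderiv3_of_bilinear (b : F →L[ℝ] G →L[ℝ] H) {f : ℝ³ → F} {g : ℝ³ → G}
    (hf : DifferentiableAt ℝ f x) (hg : DifferentiableAt ℝ g x) (μ : Fin 3) :
    pderiv3 μ (fun y => b (f y) (g y)) x = b (pderiv3 μ f x) (g x) + b (f x) (pderiv3 μ g x) := by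
  simp [pderiv3, b.fderiv_of_bilinear hf hg, add_comm]

theorem differentiableAt_pderiv3 {f : ℝ³ → F} (hf : ContDiffAt ℝ 2 f x) (μ : Fin 3) :
    DifferentiableAt ℝ (pderiv3 μ f) x :=
  ((hf.fderiv_right le_rfl).differentiableAt one_ne_zero).clm_apply (differentiableAt_const _)

theorem pderiv3_comm {f : ℝ³ → F} (hf : ContDiffAt ℝ 2 f x) (α μ : Fin 3) :
    pderiv3 α (pderiv3 μ f) x = pderiv3 μ (pderiv3 α f) x := by
  have hdf : DifferentiableAt ℝ (fderiv ℝ f) x :=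
    (hf.fderiv_right le_rfl).differentiableAt one_ne_zero
  have hsnd : ∀ v w, pderiv3 v (pderiv3 w f) x
      = fderiv ℝ (fderiv ℝ f) x (EuclideanSpace.single v 1) (EuclideanSpace.single w 1) :=
    fun v w => by
      change fderiv ℝ (fun y => fderiv ℝ f y (EuclideanSpace.single w 1)) x _ = _
      simp [fderiv_clm_apply hdf (differentiableAt_const _)]
  rw [hsnd, hsnd, hf.isSymmSndFDerivAt (by simp)]

end PartialDerivative

section VectorCalculus

variable {𝔤 : Type*} [NormedAddCommGroup 𝔤] [NormedSpace ℝ 𝔤] {x : ℝ³}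

theorem div3_add {F G : ℝ³ → Fin 3 → 𝔤} (hF : DifferentiableAt ℝ F x)
    (hG : DifferentiableAt ℝ G x) : div3 (fun y => F y + G y) x = div3 F x + div3 G x := by
  simp only [div3, Pi.add_apply, ← Finset.sum_add_distrib]
  exact Finset.sum_congr rfl fun α _ =>
    pderiv3_fun_add (differentiableAt_pi.1 hF α) (differentiableAt_pi.1 hG α) α

theorem differentiableAt_curl3 {B : ℝ³ → Fin 3 → 𝔤} (hB : ContDiffAt ℝ 2 B x) :
    DifferentiableAt ℝ (curl3 B) x :=
  differentiableAt_pi.2 fun _ => DifferentiableAt.fun_sum fun μ _ =>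
    DifferentiableAt.fun_sum fun ν _ =>
      (differentiableAt_pderiv3 (contDiffAt_pi.1 hB ν) μ).const_smul _

theorem differentiableAt_crossBr (br : 𝔤 →L[ℝ] 𝔤 →L[ℝ] 𝔤) {A B : ℝ³ → Fin 3 → 𝔤}
    (hA : DifferentiableAt ℝ A x) (hB : DifferentiableAt ℝ B x) :
    DifferentiableAt ℝ (fun y => crossBr br (A y) (B y)) x :=
  differentiableAt_pi.2 fun _ => DifferentiableAt.fun_sum fun μ _ =>
    DifferentiableAt.fun_sum fun ν _ =>
      (br.hasFDerivAt_of_bilinear (differentiableAt_pi.1 hA μ).hasFDerivAt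
        (differentiableAt_pi.1 hB ν).hasFDerivAt).differentiableAt.const_smul _

theorem div3_curl3 {B : ℝ³ → Fin 3 → 𝔤} (hB : ContDiffAt ℝ 2 B x) : div3 (curl3 B) x = 0 := by
  have hBν := contDiffAt_pi.1 hB
  calc div3 (curl3 B) x
      = ∑ α, ∑ μ, ∑ ν, levicivita α μ ν • pderiv3 α (pderiv3 μ (fun z => B z ν)) x :=
        Finset.sum_congr rfl fun α _ => pderiv3_fun_sum_sum_smul (levicivita α)
          (g := fun μ ν => pderiv3 μ (fun z => B z ν))
          (fun μ ν => differentiableAt_pderiv3 (hBν ν) μ) α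
    _ = 0 := sum_levicivita_smul_eq_zero_of_symm _ fun α μ ν => pderiv3_comm (hBν ν) α μ

theorem div3_crossBr (br : 𝔤 →L[ℝ] 𝔤 →L[ℝ] 𝔤) {A B : ℝ³ → Fin 3 → 𝔤}
    (hA : DifferentiableAt ℝ A x) (hB : DifferentiableAt ℝ B x) :
    div3 (fun y => crossBr br (A y) (B y)) x
      = dotBr br (curl3 A x) (B x) - dotBr br (A x) (curl3 B x) := by
  have hAμ := differentiableAt_pi.1 hA
  have hBν := differentiableAt_pi.1 hB
  have leibniz : div3 (fun y => crossBr br (A y) (B y)) x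
      = ∑ α, ∑ μ, ∑ ν, levicivita α μ ν • br (pderiv3 α (fun y => A y μ) x) (B x ν)
        + ∑ α, ∑ μ, ∑ ν, levicivita α μ ν • br (A x μ) (pderiv3 α (fun y => B y ν) x) := by
    simp only [div3, crossBr, ← Finset.sum_add_distrib, ← smul_add]
    refine Finset.sum_congr rfl fun α _ => ?_
    rw [pderiv3_fun_sum_sum_smul (levicivita α) (g := fun μ ν y => br (A y μ) (B y ν))
      (fun μ ν => (br.hasFDerivAt_of_bilinear (hAμ μ).hasFDerivAt
        (hBν ν).hasFDerivAt).differentiableAt) α]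
    simp only [pderiv3_of_bilinear br (hAμ _) (hBν _)]
  have curlA : dotBr br (curl3 A x) (B x)
      = ∑ α, ∑ μ, ∑ ν, levicivita α μ ν • br (pderiv3 α (fun y => A y μ) x) (B x ν) := by
    simp only [dotBr, curl3, map_sum, map_smul, FunLike.coe_sum, FunLike.coe_smul,
      Finset.sum_apply, Pi.smul_apply]
    exact sum_levicivita_smul_cycle fun α μ ν => br (pderiv3 α (fun y => A y μ) x) (B x ν)
  have curlB : dotBr br (A x) (curl3 B x)
      = -∑ α, ∑ μ, ∑ ν, levicivita α μ ν • br (A x μ) (pderiv3 α (fun y => B y ν) x) := by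
    simp only [dotBr, curl3, map_sum, map_smul]
    exact sum_levicivita_smul_swap fun α μ ν => br (A x μ) (pderiv3 α (fun y => B y ν) x)
  rw [leibniz, curlA, curlB, sub_neg_eq_add]

end VectorCalculus

section Regularity

variable {𝔤 : Type*} [NormedAddCommGroup 𝔤] [NormedSpace ℝ 𝔤] {n : WithTop ℕ∞}

theorem ContDiffOn.crossBr {E : Type*} [NormedAddCommGroup E] [NormedSpace ℝ E] {U : Set E}
    (br : 𝔤 →L[ℝ] 𝔤 →L[ℝ] 𝔤) {A B : E → Fin 3 → 𝔤}
    (hA : ContDiffOn ℝ n A U) (hB : ContDiffOn ℝ n B U) :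
    ContDiffOn ℝ n (fun y => crossBr br (A y) (B y)) U :=
  contDiffOn_pi.2 fun _ => ContDiffOn.sum fun μ _ => ContDiffOn.sum fun ν _ =>
    ((br.contDiff.comp_contDiffOn (contDiffOn_pi.1 hA μ)).clm_apply
      (contDiffOn_pi.1 hB ν)).const_smul _

theorem ContDiffOn.curl3 {U : Set ℝ³} {m : WithTop ℕ∞} {A : ℝ³ → Fin 3 → 𝔤}
    (hA : ContDiffOn ℝ n A U) (hU : IsOpen U) (hmn : m + 1 ≤ n) :
    ContDiffOn ℝ m (curl3 A) U :=
  contDiffOn_pi.2 fun _ => ContDiffOn.sum fun _ _ => ContDiffOn.sum fun ν _ =>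
    (((contDiffOn_pi.1 hA ν).fderiv_of_isOpen hU hmn).clm_apply contDiffOn_const).const_smul _

end Regularity

theorem yangMills_bianchi_general {𝔤 : Type*} [NormedAddCommGroup 𝔤] [NormedSpace ℝ 𝔤]
    (br : 𝔤 →L[ℝ] 𝔤 →L[ℝ] 𝔤)
    (br_alt : ∀ a : 𝔤, br a a = 0)
    (br_jacobi : ∀ a b c : 𝔤, br a (br b c) + br b (br c a) + br c (br a b) = 0)
    (U : Set (EuclideanSpace ℝ (Fin 3))) (hU : IsOpen U)
    (A : EuclideanSpace ℝ (Fin 3) → Fin 3 → 𝔤)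
    (hA : ContDiffOn ℝ 3 A U)
    (B J : EuclideanSpace ℝ (Fin 3) → Fin 3 → 𝔤)
    (hB : B = fun y α => curl3 A y α + (1/2 : ℝ) • crossBr br (A y) (A y) α)
    (hJ : J = fun y α => curl3 B y α + crossBr br (A y) (B y) α) :
    ∀ x ∈ U, div3 J x + dotBr br (A x) (J x) = 0 := by
  replace hB : B = fun y => curl3 A y + (1/2 : ℝ) • crossBr br (A y) (A y) := hB
  replace hJ : J = fun y => curl3 B y + crossBr br (A y) (B y) := hJ
  have hBU : ContDiffOn ℝ 2 B U :=
    hB ▸ (hA.curl3 hU le_rfl).add (((hA.crossBr br hA).of_le (by norm_num)).const_smul _)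
  intro x hx
  have hAx : DifferentiableAt ℝ A x :=
    (hA.contDiffAt (hU.mem_nhds hx)).differentiableAt (by norm_num)
  have hBx : ContDiffAt ℝ 2 B x := hBU.contDiffAt (hU.mem_nhds hx)
  have hBx' : DifferentiableAt ℝ B x := hBx.differentiableAt two_ne_zero
  subst hJ
  rw [div3_add (differentiableAt_curl3 hBx) (differentiableAt_crossBr br hAx hBx'),
    div3_curl3 hBx, div3_crossBr br hAx hBx', dotBr_add_right]
  have hcancel := dotBr_add_dotBr_crossBr_eq_zero br br_alt br_jacobi (A x) (curl3 A x) (B x)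
    (congrFun hB x)
  linear_combination (norm := module) hcancel

/-- with `B := curl A + (1/2) • ⋆[A,A]`, the Yang–Mills (Bianchi-type)
identity `div(curl B + ⋆[A,B]) + ⋆[A, ⋆(curl B + ⋆[A,B])] = 0` holds on `U`. -/
theorem yangMills_bianchi {𝔤 : Type*} [NormedAddCommGroup 𝔤] [NormedSpace ℝ 𝔤]
    [FiniteDimensional ℝ 𝔤]
    (br : 𝔤 →L[ℝ] 𝔤 →L[ℝ] 𝔤)
    (br_alt : ∀ a : 𝔤, br a a = 0)
    (br_jacobi : ∀ a b c : 𝔤, br a (br b c) + br b (br c a) + br c (br a b) = 0)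
    (U : Set (EuclideanSpace ℝ (Fin 3))) (hU : IsOpen U)
    (A : EuclideanSpace ℝ (Fin 3) → Fin 3 → 𝔤)
    (hA : ContDiffOn ℝ 3 A U)
    (B J : EuclideanSpace ℝ (Fin 3) → Fin 3 → 𝔤)
    (hB : B = fun y α => curl3 A y α + (1/2 : ℝ) • crossBr br (A y) (A y) α)
    (hJ : J = fun y α => curl3 B y α + crossBr br (A y) (B y) α) :
    ∀ x ∈ U, div3 J x + dotBr br (A x) (J x) = 0 :=
  yangMills_bianchi_general br br_alt br_jacobi U hU A hA B J hB hJ
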